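/- arXiv:0909.2841 — 4 statements merged into one kernel-verified Lean document; each statement's English description precedes it below -/
import Mathlib

section
/- Let G be a finitely generated group with a surjective homomorphism χ : G → ℤ. Then either ker(χ) is finitely generated, or G can be written as a proper HNN extension with associated homomorphism χ: there exist a subgroup H of ker(χ), subgroups A and B of H with at least one of A, B a proper subgroup of H, and an element t ∈ G with χ(t) = 1, such that t A t⁻¹ = B, G is generated by H ∪ {t}, and the canonical homomorphism from the HNN extension of H with associated subgroups A and B (with stable letter mapping to t and the isomorphism A → B given by conjugation by t) to G is an isomorphism. -/
/-!
Choose `t` with `χ t = 1` and a finitely generated `K ≤ ker χ` with `G = ⟨K, t⟩`; then `ker χ`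
is generated by the conjugates `K_j = t ^ j K t ^ (-j)`, `j ∈ ℤ`. If `K` lies both in
`⟨K_j | j ≥ 1⟩` and in `⟨K_j | j ≤ -1⟩`, then by finite generation it already lies in
`⟨K_j | 1 ≤ j ≤ n⟩` and in `⟨K_j | -n ≤ j ≤ -1⟩`, so `⟨K_j | |j| ≤ n⟩` is normalised by `t` and
is all of `ker χ`. Otherwise, say `K ⊄ ⟨K_j | j ≥ 1⟩`: then `H = ⟨K_j | j ≥ 0⟩` properly contains
`t H t⁻¹`, and `G` is the ascending HNN extension of `H`. Indeed every element of the abstract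
ascending extension has the form `t ^ (-m) h t ^ n`, and applying `χ` forces `m = n`, so the
canonical map to `G` is injective. The case `K ⊄ ⟨K_j | j ≤ -1⟩` is symmetric.
-/

open Subgroup Set

section

variable {G : Type*} [Group G]

theorem Subgroup.FG.map {G' : Type*} [Group G'] {K : Subgroup G} (hK : K.FG) (f : G →* G') :
    (K.map f).FG := by
  obtain ⟨X, rfl, hX⟩ := (fg_iff K).mp hK
  exact (fg_iff _).mpr ⟨f '' X, (MonoidHom.map_closure f X).symm, hX.image f⟩

theorem Subgroup.FG.exists_le_of_le_iSup {ι : Type*} [Nonempty ι] {f : ι → Subgroup G}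
    (hf : Directed (· ≤ ·) f) {K : Subgroup G} (hK : K.FG) (h : K ≤ ⨆ i, f i) :
    ∃ i, K ≤ f i := by
  obtain ⟨X, rfl, hX⟩ := (fg_iff K).mp hK
  choose! i hi using fun x (hx : x ∈ X) => (mem_iSup_of_directed hf).mp (h (subset_closure hx))
  classical
  obtain ⟨j, hj⟩ := hf.finset_le (hX.toFinset.image i)
  exact ⟨j, (closure_le _).mpr fun x hx =>
    hj (i x) (Finset.mem_image_of_mem _ (hX.mem_toFinset.mpr hx)) (hi x hx)⟩

theorem Subgroup.mem_normalizer_of_map_conj_le {H : Subgroup G} {g : G}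
    (h₁ : H.map (MulAut.conj g) ≤ H) (h₂ : H.map (MulAut.conj g⁻¹) ≤ H) :
    g ∈ normalizer (H : Set G) := by
  refine mem_normalizer_iff_map_conj_eq.mpr (le_antisymm h₁ fun x hx => ?_)
  exact ⟨_, h₂ (mem_map_of_mem _ hx), by simp [mul_assoc]⟩

theorem exists_eq_inv_pow_mul_mul_pow {R : Subgroup G} {τ : G}
    (hR : ∀ r ∈ R, τ * r * τ⁻¹ ∈ R) {x : G} (hx : x ∈ R ⊔ zpowers τ) :
    ∃ m n : ℕ, ∃ r ∈ R, x = (τ ^ m)⁻¹ * r * τ ^ n := by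
  have hpow : ∀ n : ℕ, ∀ r ∈ R, τ ^ n * r * (τ ^ n)⁻¹ ∈ R := by
    intro n
    induction n with
    | zero => simp
    | succ n ih =>
      intro r hr
      simpa [pow_succ', mul_assoc] using hR _ (ih r hr)
  rw [← closure_eq R, zpowers_eq_closure, ← Subgroup.closure_union] at hx
  induction hx using closure_induction with
  | mem y hy =>
    rcases hy with hy | rfl
    · exact ⟨0, 0, y, hy, by simp⟩
    · exact ⟨0, 1, 1, one_mem R, by simp⟩
  | one => exact ⟨0, 0, 1, one_mem R, by simp⟩
  | mul x y _ _ ihx ihy =>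
    obtain ⟨m, n, r, hr, rfl⟩ := ihx
    obtain ⟨m', n', r', hr', rfl⟩ := ihy
    refine ⟨m' + m, n + n', (τ ^ m' * r * (τ ^ m')⁻¹) * (τ ^ n * r' * (τ ^ n)⁻¹),
      mul_mem (hpow m' r hr) (hpow n r' hr'), ?_⟩
    simp only [pow_add]
    group
  | inv x _ ihx =>
    obtain ⟨m, n, r, hr, rfl⟩ := ihx
    exact ⟨n, m, r⁻¹, inv_mem hr, by group⟩

theorem MonoidHom.injective_of_ascending {K M : Type*} [Group K] [Group M] (f : G →* K)
    (χ : K →* M) {R : Subgroup G} {τ : G} (hR : ∀ r ∈ R, τ * r * τ⁻¹ ∈ R)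
    (hgen : R ⊔ zpowers τ = ⊤) (hfR : ∀ r ∈ R, f r = 1 → r = 1)
    (hχR : ∀ r ∈ R, χ (f r) = 1) (hτ : ¬IsOfFinOrder (χ (f τ))) :
    Function.Injective f := by
  refine (injective_iff_map_eq_one f).mpr fun x hx => ?_
  obtain ⟨m, n, r, hr, rfl⟩ := exists_eq_inv_pow_mul_mul_pow hR (hgen ▸ mem_top x)
  obtain rfl : m = n := by
    have := congrArg χ hx
    simp only [map_mul, map_inv, map_pow, hχR r hr, mul_one, map_one, inv_mul_eq_one] at this
    exact injective_pow_iff_not_isOfFinOrder.mpr hτ this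
  have hr1 : f r = 1 := by
    rwa [map_mul, map_mul, mul_eq_one_iff_eq_inv, map_inv, inv_mul_eq_iff_eq_mul,
      mul_inv_cancel] at hx
  simp [hfR r hr hr1]

namespace HNNExtension

variable {H : Type*} [Group H] {A B : Subgroup H} {φ : A ≃* B}

theorem range_of_sup_zpowers_t : (of : H →* HNNExtension H A B φ).range ⊔ zpowers t = ⊤ := by
  refine (eq_top_iff' _).mpr fun x => ?_
  induction x using induction_on with
  | of g => exact mem_sup_left ⟨g, rfl⟩
  | t => exact mem_sup_right (mem_zpowers t)
  | mul x y hx hy => exact mul_mem hx hy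
  | inv x hx => exact inv_mem hx

theorem t_mul_mul_inv_t_mem_range_of (hA : A = ⊤) :
    ∀ r ∈ (of : H →* HNNExtension H A B φ).range, t * r * t⁻¹ ∈ of.range := by
  rintro _ ⟨h, rfl⟩
  have ha : h ∈ A := hA ▸ mem_top h
  exact ⟨φ ⟨h, ha⟩, by rw [t_mul_of ⟨h, ha⟩, mul_inv_cancel_right]⟩

theorem inv_t_mul_mul_t_mem_range_of (hB : B = ⊤) :
    ∀ r ∈ (of : H →* HNNExtension H A B φ).range, t⁻¹ * r * t⁻¹⁻¹ ∈ of.range := by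
  rintro _ ⟨h, rfl⟩
  have hb : h ∈ B := hB ▸ mem_top h
  exact ⟨φ.symm ⟨h, hb⟩, by rw [inv_t_mul_of ⟨h, hb⟩, mul_inv_cancel_right]⟩

end HNNExtension

def conjSubgroupOfEquiv {H A B : Subgroup G} (t : G) (hA : A ≤ H) (hB : B ≤ H)
    (hAB : A.map (MulAut.conj t) = B) : A.subgroupOf H ≃* B.subgroupOf H :=
  (subgroupOfEquivOfLe hA).trans <| ((MulAut.conj t).subgroupMap A).trans <|
    (MulEquiv.subgroupCongr hAB).trans (subgroupOfEquivOfLe hB).symm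

def IsHNNDecomposition (H A B : Subgroup G) (t : G) : Prop :=
  (fun g => t * g * t⁻¹) '' (A : Set G) = (B : Set G) ∧
    closure ((H : Set G) ∪ {t}) = ⊤ ∧
    ∃ φ : A.subgroupOf H ≃* B.subgroupOf H,
      (∀ a : A.subgroupOf H, ((φ a : H) : G) = t * ((a : H) : G) * t⁻¹) ∧
      ∃ e : HNNExtension H (A.subgroupOf H) (B.subgroupOf H) φ ≃* G,
        (∀ h : H, e (HNNExtension.of h) = h) ∧ e HNNExtension.t = t

theorem isHNNDecomposition_of_eq_or_eq {M : Type*} [Group M] (χ : G →* M) {H A B : Subgroup G}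
    {t : G} (hH : H ≤ χ.ker) (ht : ¬IsOfFinOrder (χ t)) (hA : A ≤ H) (hB : B ≤ H)
    (hAB : A.map (MulAut.conj t) = B) (hasc : A = H ∨ B = H) (hgen : H ⊔ zpowers t = ⊤) :
    IsHNNDecomposition H A B t := by
  set φ := conjSubgroupOfEquiv t hA hB hAB
  have hφ : ∀ a : A.subgroupOf H, ((φ a : H) : G) = t * ((a : H) : G) * t⁻¹ := fun _ => rfl
  set f := HNNExtension.lift (φ := φ) H.subtype t fun a => by simp [hφ]
  have hf_of : ∀ h : H, f (HNNExtension.of h) = h := HNNExtension.lift_of _ _ _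
  have hf_t : f HNNExtension.t = t := HNNExtension.lift_t _ _ _
  have hsurj : Function.Surjective f := by
    rw [← MonoidHom.range_eq_top, eq_top_iff, ← hgen]
    exact sup_le (fun h hh => ⟨_, hf_of ⟨h, hh⟩⟩) (zpowers_le.mpr ⟨_, hf_t⟩)
  have hinj : Function.Injective f := by
    have hfR : ∀ r ∈ HNNExtension.of.range, f r = 1 → r = 1 := by
      rintro _ ⟨h, rfl⟩ hr
      rw [hf_of, OneMemClass.coe_eq_one] at hr
      rw [hr, map_one]
    have hχR : ∀ r ∈ HNNExtension.of.range, χ (f r) = 1 := by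
      rintro _ ⟨h, rfl⟩
      exact hf_of h ▸ hH h.2
    rcases hasc with hA' | hB'
    · exact f.injective_of_ascending χ
        (HNNExtension.t_mul_mul_inv_t_mem_range_of (subgroupOf_eq_top.mpr hA'.ge))
        HNNExtension.range_of_sup_zpowers_t hfR hχR (hf_t ▸ ht)
    · refine f.injective_of_ascending χ
        (HNNExtension.inv_t_mul_mul_t_mem_range_of (subgroupOf_eq_top.mpr hB'.ge))
        (by rw [zpowers_inv]; exact HNNExtension.range_of_sup_zpowers_t) hfR hχR ?_
      rwa [map_inv, hf_t, map_inv, isOfFinOrder_inv_iff]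
  refine ⟨by rw [← hAB, coe_map]; rfl, ?_, φ, hφ, MulEquiv.ofBijective f ⟨hinj, hsurj⟩, hf_of, hf_t⟩
  rwa [Subgroup.closure_union, closure_eq, ← zpowers_eq_closure]

def conjSpan (t : G) (K : Subgroup G) (S : Set ℤ) : Subgroup G :=
  ⨆ j ∈ S, K.map (MulAut.conj (t ^ j))

section conjSpan

variable {t : G} {K : Subgroup G} {S T : Set ℤ}

theorem map_conj_zpow_le_conjSpan {j : ℤ} (hj : j ∈ S) :
    K.map (MulAut.conj (t ^ j)) ≤ conjSpan t K S := by
  unfold conjSpan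
  apply le_biSup _ hj

theorem le_conjSpan (hS : 0 ∈ S) : K ≤ conjSpan t K S :=
  fun x hx => map_conj_zpow_le_conjSpan hS ⟨x, hx, by simp⟩

theorem conjSpan_mono (h : S ⊆ T) : conjSpan t K S ≤ conjSpan t K T :=
  biSup_mono h

theorem map_conj_zpow_conjSpan (k : ℤ) :
    (conjSpan t K S).map (MulAut.conj (t ^ k)) = conjSpan t K ((· + k) '' S) := by
  simp only [conjSpan, Subgroup.map_iSup, map_map, iSup_image]
  refine iSup_congr fun j => iSup_congr fun _ => congrArg (K.map ·) (MonoidHom.ext fun x => ?_)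
  simp only [MonoidHom.comp_apply, MonoidHom.coe_coe, MulAut.conj_apply, zpow_add]
  group

theorem map_conj_conjSpan (S : Set ℤ) :
    (conjSpan t K S).map (MulAut.conj t) = conjSpan t K ((· + 1) '' S) := by
  simpa using map_conj_zpow_conjSpan (t := t) (K := K) (S := S) 1

theorem map_conj_zpow_le_conjSpan_of_le (h : K ≤ conjSpan t K T) (k : ℤ) :
    K.map (MulAut.conj (t ^ k)) ≤ conjSpan t K ((· + k) '' T) :=
  (map_mono h).trans (map_conj_zpow_conjSpan k).le

theorem conjSpan_le_of_normal {N : Subgroup G} [N.Normal] (hK : K ≤ N) : conjSpan t K S ≤ N :=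
  iSup₂_le fun _ _ => (map_mono hK).trans (Normal.map_conj_eq N _).le

theorem normal_conjSpan_univ (hK : K ⊔ zpowers t = ⊤) : (conjSpan t K univ).Normal := by
  rw [← normalizer_eq_top_iff, eq_top_iff, ← hK]
  refine sup_le ((le_conjSpan (mem_univ 0)).trans le_normalizer) (zpowers_le.mpr ?_)
  rw [mem_normalizer_iff_map_conj_eq, map_conj_conjSpan, image_univ_of_surjective]
  exact add_right_surjective 1

theorem ker_eq_conjSpan_univ {M : Type*} [Group M] (χ : G →* M) (hKχ : K ≤ χ.ker)
    (hK : K ⊔ zpowers t = ⊤) (ht : ¬IsOfFinOrder (χ t)) : χ.ker = conjSpan t K univ := by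
  have := normal_conjSpan_univ hK
  refine le_antisymm (fun g hg => ?_) (conjSpan_le_of_normal hKχ)
  have hsup : conjSpan t K univ ⊔ zpowers t = ⊤ :=
    top_le_iff.mp (hK ▸ sup_le_sup_right (le_conjSpan (mem_univ 0)) _)
  obtain ⟨n, hn, _, ⟨m, rfl⟩, rfl⟩ := mem_sup_of_normal_left.mp (hsup ▸ mem_top g)
  have hn1 : χ n = 1 := conjSpan_le_of_normal hKχ hn
  have hm : χ t ^ m = 1 := by rwa [MonoidHom.mem_ker, map_mul, hn1, one_mul, map_zpow] at hg
  obtain rfl : m = 0 := by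
    by_contra hm0
    exact ht (isOfFinOrder_iff_zpow_eq_one.mpr ⟨m, hm0, hm⟩)
  simpa using hn

theorem Subgroup.FG.exists_le_conjSpan_inter_Icc (hK : K.FG) (h : K ≤ conjSpan t K S) :
    ∃ n : ℕ, K ≤ conjSpan t K (S ∩ Icc (-n) n) := by
  have hmono : Monotone fun n : ℕ => conjSpan t K (S ∩ Icc (-n) n) := fun m n hmn =>
    conjSpan_mono (inter_subset_inter_right _ (Icc_subset_Icc (by omega) (by omega)))
  refine hK.exists_le_of_le_iSup hmono.directed_le (h.trans (iSup₂_le fun j hj => ?_))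
  exact le_iSup_of_le j.natAbs (map_conj_zpow_le_conjSpan ⟨hj, by omega, by omega⟩)

theorem mem_normalizer_conjSpan_Icc {n : ℕ} (hpos : K ≤ conjSpan t K (Icc 1 n))
    (hneg : K ≤ conjSpan t K (Icc (-n) (-1))) :
    t ∈ normalizer (conjSpan t K (Icc (-n) n) : Set G) := by
  refine mem_normalizer_of_map_conj_le ?_ ?_
  · rw [map_conj_conjSpan, image_add_const_Icc]
    refine iSup₂_le fun j hj => ?_
    obtain ⟨hj₁, hj₂⟩ := mem_Icc.mp hj
    rcases hj₂.lt_or_eq with hjn | rfl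
    · exact map_conj_zpow_le_conjSpan ⟨by omega, by omega⟩
    · refine (map_conj_zpow_le_conjSpan_of_le hneg _).trans (conjSpan_mono ?_)
      rw [image_add_const_Icc]
      exact Icc_subset_Icc (by omega) (by omega)
  · rw [← zpow_neg_one, map_conj_zpow_conjSpan, image_add_const_Icc]
    refine iSup₂_le fun j hj => ?_
    obtain ⟨hj₁, hj₂⟩ := mem_Icc.mp hj
    rcases hj₁.lt_or_eq with hjn | rfl
    · exact map_conj_zpow_le_conjSpan ⟨by omega, by omega⟩
    · refine (map_conj_zpow_le_conjSpan_of_le hpos _).trans (conjSpan_mono ?_)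
      rw [image_add_const_Icc]
      exact Icc_subset_Icc (by omega) (by omega)

theorem Subgroup.FG.conjSpan_univ (hK : K.FG) (hpos : K ≤ conjSpan t K (Ici 1))
    (hneg : K ≤ conjSpan t K (Iic (-1))) : (conjSpan t K univ).FG := by
  obtain ⟨n₁, h₁⟩ := hK.exists_le_conjSpan_inter_Icc hpos
  obtain ⟨n₂, h₂⟩ := hK.exists_le_conjSpan_inter_Icc hneg
  have ht := mem_normalizer_conjSpan_Icc (n := n₁ + n₂)
    (h₁.trans <| conjSpan_mono fun j hj => by
      simp only [mem_inter_iff, mem_Ici, mem_Icc] at hj ⊢; omega)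
    (h₂.trans <| conjSpan_mono fun j hj => by
      simp only [mem_inter_iff, mem_Iic, mem_Icc] at hj ⊢; omega)
  have hL : conjSpan t K univ = conjSpan t K (Icc (-(n₁ + n₂ : ℕ)) (n₁ + n₂ : ℕ)) := by
    refine le_antisymm (iSup₂_le fun j _ => ?_) (conjSpan_mono (subset_univ _))
    rw [← mem_normalizer_iff_map_conj_eq.mp (zpow_mem ht j)]
    exact map_mono (le_conjSpan ⟨by omega, by omega⟩)
  rw [hL]
  exact FG.biSup (finite_Icc _ _) _ fun j _ => hK.map _

end conjSpan

theorem exists_fg_le_ker_sup_zpowers_eq_top (hG : Group.FG G) (χ : G →* Multiplicative ℤ) {t : G}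
    (ht : χ t = Multiplicative.ofAdd 1) :
    ∃ K : Subgroup G, K.FG ∧ K ≤ χ.ker ∧ K ⊔ zpowers t = ⊤ := by
  obtain ⟨X, hX, hXfin⟩ := Group.fg_iff.mp hG
  set ρ : G → G := fun g => g * t ^ (-(χ g).toAdd)
  have hρ : ∀ g, χ (ρ g) = 1 := fun g => by simp [ρ, ht, ← ofAdd_zsmul]
  refine ⟨closure (ρ '' X), (fg_iff _).mpr ⟨_, rfl, hXfin.image ρ⟩,
    (closure_le _).mpr (image_subset_iff.mpr fun g _ => hρ g), top_le_iff.mp ?_⟩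
  rw [← hX, closure_le]
  intro g hg
  have : g = ρ g * t ^ (χ g).toAdd := by simp [ρ]
  rw [this]
  exact mul_mem (mem_sup_left (subset_closure (mem_image_of_mem ρ hg)))
    (mem_sup_right (zpow_mem_zpowers t _))

end

/-- If `G` is a finitely generated group with a surjective homomorphism
`χ : G → ℤ`, then either `ker χ` is finitely generated, or `G` is a proper HNN extension
with associated homomorphism `χ`: there are a subgroup `H ≤ ker χ`, subgroups `A, B ≤ H`
with at least one of them proper in `H`, and `t ∈ G` with `χ(t) = 1`, such that
`t A t⁻¹ = B`, `G = ⟨H, t⟩`, and the canonical homomorphism from the HNN extension of `H`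
with associated subgroups `A` and `B` (stable letter ↦ `t`, `θ : A → B` given by
conjugation by `t`) to `G` is an isomorphism. -/
theorem statement9 {G : Type*} [Group G] (hfg : Group.FG G)
    (χ : G →* Multiplicative ℤ) (hsurj : Function.Surjective χ) :
    χ.ker.FG ∨
    ∃ (H : Subgroup G), H ≤ χ.ker ∧
    ∃ A B : Subgroup G, A ≤ H ∧ B ≤ H ∧ (A < H ∨ B < H) ∧
    ∃ t : G, χ t = Multiplicative.ofAdd 1 ∧
      (fun g => t * g * t⁻¹) '' (A : Set G) = (B : Set G) ∧
      Subgroup.closure ((H : Set G) ∪ {t}) = ⊤ ∧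
      ∃ (φ : (A.subgroupOf H) ≃* (B.subgroupOf H)),
        (∀ a : A.subgroupOf H, ((φ a : ↥H) : G) = t * ((a : ↥H) : G) * t⁻¹) ∧
        ∃ e : HNNExtension ↥H (A.subgroupOf H) (B.subgroupOf H) φ ≃* G,
          (∀ h : ↥H, e (HNNExtension.of h) = (h : G)) ∧ e HNNExtension.t = t := by
  obtain ⟨t, ht⟩ := hsurj (Multiplicative.ofAdd 1)
  have ht' : ¬IsOfFinOrder (χ t) := ht ▸ not_isOfFinOrder_of_isMulTorsionFree (by decide)
  obtain ⟨K, hKfg, hKχ, hKt⟩ := exists_fg_le_ker_sup_zpowers_eq_top hfg χ ht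
  have hker := ker_eq_conjSpan_univ χ hKχ hKt ht'
  have hle_ker : ∀ S, conjSpan t K S ≤ χ.ker := fun S => hker ▸ conjSpan_mono (subset_univ S)
  have hgen : ∀ S : Set ℤ, 0 ∈ S → conjSpan t K S ⊔ zpowers t = ⊤ := fun S hS =>
    top_le_iff.mp (hKt ▸ sup_le_sup_right (le_conjSpan hS) _)
  by_cases hpos : K ≤ conjSpan t K (Ici 1)
  · by_cases hneg : K ≤ conjSpan t K (Iic (-1))
    · exact Or.inl (hker ▸ hKfg.conjSpan_univ hpos hneg)
    have hAH : conjSpan t K (Iic (-1)) ≤ conjSpan t K (Iic 0) :=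
      conjSpan_mono (Iic_subset_Iic.mpr (by norm_num))
    refine Or.inr ⟨_, hle_ker _, _, _, hAH, le_rfl,
      Or.inl (hAH.lt_of_ne fun h => hneg (h ▸ le_conjSpan self_mem_Iic)), t, ht,
      isHNNDecomposition_of_eq_or_eq χ (hle_ker _) ht' hAH le_rfl ?_ (Or.inr rfl)
        (hgen _ self_mem_Iic)⟩
    rw [map_conj_conjSpan, image_add_const_Iic]
    norm_num
  · have hBH : conjSpan t K (Ici 1) ≤ conjSpan t K (Ici 0) :=
      conjSpan_mono (Ici_subset_Ici.mpr (by norm_num))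
    refine Or.inr ⟨_, hle_ker _, _, _, le_rfl, hBH,
      Or.inr (hBH.lt_of_ne fun h => hpos (h ▸ le_conjSpan self_mem_Ici)), t, ht,
      isHNNDecomposition_of_eq_or_eq χ (hle_ker _) ht' le_rfl hBH ?_ (Or.inl rfl)
        (hgen _ self_mem_Ici)⟩
    rw [map_conj_conjSpan, image_add_const_Ici]
    norm_num
end

section
/- Let K be a group that contains no subgroup isomorphic to ℤ × ℤ and let α be an automorphism of K. If the semidirect product G = K ⋊_α ℤ contains a subgroup isomorphic to ℤ × ℤ, then α has a periodic conjugacy class: there exist z ∈ K with z ≠ e, an integer i ≠ 0, and k ∈ K such that α^i(z) = k⁻¹ z k. -/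
/-- The action of `Multiplicative ℤ` on `K` whose generator acts by the automorphism `α`. -/
def zAction {K : Type*} [Group K] (α : MulAut K) : Multiplicative ℤ →* MulAut K where
  toFun n := α ^ (Multiplicative.toAdd n)
  map_one' := by simp
  map_mul' m n := by simp [zpow_add]

/-- The semidirect product `K ⋊_α ℤ`, i.e. the non-proper HNN extension of `K` by `α`. -/
abbrev zSemidirect (K : Type*) [Group K] (α : MulAut K) :=
  SemidirectProduct K (Multiplicative ℤ) (zAction α)

/-!
A copy `S` of `ℤ × ℤ` in `K ⋊_α ℤ` cannot lie in `K`, so some `a ∈ S` has nonzero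
`ℤ`-coordinate `i`. The projection `S → ℤ` is not injective (ranks `2 > 1`), so there is
`c ≠ 1` in `S ∩ K`. Since `a` commutes with `c = (z, 0)`, comparing `K`-coordinates of
`a c = c a` gives `αⁱ(z) = k⁻¹ z k`, where `k` is the `K`-coordinate of `a`.
-/

theorem AddMonoidHom.not_injective_int_prod_int (f : ℤ × ℤ →+ ℤ) :
    ¬ Function.Injective f := by
  intro hf
  have := LinearMap.finrank_le_finrank_of_injective (f := f.toIntLinearMap) hf
  simp at this

theorem exists_ne_one_map_eq_one_of_mulEquiv_int_prod_int {A : Type*} [Group A]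
    (e : A ≃* Multiplicative (ℤ × ℤ)) (f : A →* Multiplicative ℤ) :
    ∃ c : A, c ≠ 1 ∧ f c = 1 := by
  have hf : ¬ Function.Injective f := fun hf =>
    AddMonoidHom.not_injective_int_prod_int
      (MonoidHom.toAdditive (f.comp e.symm.toMonoidHom)) (hf.comp e.symm.injective)
  simpa [injective_iff_map_eq_one, and_comm] using hf

namespace SemidirectProduct

variable {N G : Type*} [Group N] [Group G] {φ : G →* MulAut N}

theorem exists_mulEquiv_of_le_ker_rightHom {S : Subgroup (N ⋊[φ] G)}
    (hS : S ≤ (rightHom : N ⋊[φ] G →* G).ker) :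
    ∃ H : Subgroup N, Nonempty (H ≃* S) := by
  rw [← range_inl_eq_ker_rightHom] at hS
  exact ⟨S.comap inl, ⟨(Subgroup.equivMapOfInjective _ inl inl_injective).trans
    (MulEquiv.subgroupCongr (Subgroup.map_comap_eq_self hS))⟩⟩

theorem map_right_left_of_commute {a c : N ⋊[φ] G} (hc : c.right = 1) (h : Commute a c) :
    φ a.right c.left = a.left⁻¹ * c.left * a.left := by
  have hleft := congrArg left h.eq
  simp only [mul_left, hc, map_one, MulAut.one_apply] at hleft
  rw [mul_assoc, ← hleft, inv_mul_cancel_left]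

end SemidirectProduct

/-- If `K` contains no subgroup isomorphic to `ℤ × ℤ` and the semidirect
product `G = K ⋊_α ℤ` contains a subgroup isomorphic to `ℤ × ℤ`, then `α` has a periodic
conjugacy class: there are `z ∈ K`, `z ≠ 1`, `i ≠ 0` and `k ∈ K` with `αⁱ(z) = k⁻¹ z k`. -/
theorem statement13 {K : Type*} [Group K]
    (hK : ∀ H : Subgroup K, ¬ Nonempty (↥H ≃* Multiplicative (ℤ × ℤ)))
    (α : MulAut K)
    (hG : ∃ S : Subgroup (zSemidirect K α), Nonempty (↥S ≃* Multiplicative (ℤ × ℤ))) :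
    ∃ (z : K) (i : ℤ) (k : K), z ≠ 1 ∧ i ≠ 0 ∧ (α ^ i) z = k⁻¹ * z * k := by
  obtain ⟨S, ⟨e⟩⟩ := hG
  by_cases hS : S ≤ (SemidirectProduct.rightHom : zSemidirect K α →* _).ker
  · obtain ⟨H, ⟨f⟩⟩ := SemidirectProduct.exists_mulEquiv_of_le_ker_rightHom hS
    exact absurd ⟨f.trans e⟩ (hK H)
  obtain ⟨a, haS, ha⟩ := SetLike.not_le_iff_exists.mp hS
  obtain ⟨c, hc1, hc⟩ :=
    exists_ne_one_map_eq_one_of_mulEquiv_int_prod_int e (SemidirectProduct.rightHom.comp S.subtype)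
  have hcomm : Commute a c := congrArg Subtype.val
    (e.injective (by rw [map_mul, map_mul, mul_comm]) : (⟨a, haS⟩ * c : S) = c * ⟨a, haS⟩)
  refine ⟨(c : zSemidirect K α).left, Multiplicative.toAdd a.right, a.left, ?_, ?_,
    SemidirectProduct.map_right_left_of_commute hc hcomm⟩
  · exact fun h => hc1 (Subtype.ext (SemidirectProduct.ext h hc))
  · exact fun h => ha (Multiplicative.toAdd.injective h)
end

section
/- Let K be a torsion-free group and let α be an automorphism of K with a periodic conjugacy class, i.e. there exist k ∈ K with k ≠ e, an integer n ≠ 0, and c ∈ K with αⁿ(k) = c k c⁻¹. Then the semidirect product G = K ⋊_α ℤ contains a subgroup isomorphic to ℤ × ℤ (namely the subgroup generated by k and c⁻¹tⁿ, where t is the generator of the ℤ factor). -/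
/-!
In `G = K ⋊_α ℤ` let `a = k` and `b = c⁻¹ tⁿ`. Since `tⁿ k t⁻ⁿ = αⁿ(k) = c k c⁻¹`, the
element `b` commutes with `a`, so `(i, j) ↦ aⁱ bʲ` is a homomorphism `ℤ × ℤ → G` onto
`⟨a, b⟩`. It is injective: projecting `aⁱ bʲ = 1` to `ℤ` gives `n j = 0`, hence `j = 0`,
and then `kⁱ = 1` forces `i = 0` because `K` is torsion-free.
-/

open SemidirectProduct

namespace Commute

variable {G : Type*} [Group G] {a b : G}

def zpowPairHom (hab : Commute a b) : Multiplicative (ℤ × ℤ) →* G where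
  toFun p := a ^ p.toAdd.1 * b ^ p.toAdd.2
  map_one' := by simp
  map_mul' p q := by
    simp only [toAdd_mul, Prod.fst_add, Prod.snd_add, zpow_add]
    exact ((hab.symm.zpow_zpow _ _).mul_mul_mul_comm _ _).symm

@[simp]
theorem zpowPairHom_apply (hab : Commute a b) (p : Multiplicative (ℤ × ℤ)) :
    hab.zpowPairHom p = a ^ p.toAdd.1 * b ^ p.toAdd.2 :=
  rfl

theorem range_zpowPairHom (hab : Commute a b) :
    hab.zpowPairHom.range = Subgroup.closure {a, b} := by
  apply le_antisymm
  · rintro x ⟨p, rfl⟩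
    exact mul_mem (zpow_mem (Subgroup.subset_closure (by simp)) _)
      (zpow_mem (Subgroup.subset_closure (by simp)) _)
  · rw [Subgroup.closure_le]
    rintro x (rfl | rfl)
    · exact ⟨Multiplicative.ofAdd (1, 0), by simp⟩
    · exact ⟨Multiplicative.ofAdd (0, 1), by simp⟩

theorem zpowPairHom_injective (hab : Commute a b)
    (hind : ∀ i j : ℤ, a ^ i * b ^ j = 1 → i = 0 ∧ j = 0) :
    Function.Injective hab.zpowPairHom := by
  rw [injective_iff_map_eq_one]
  intro p hp
  obtain ⟨hi, hj⟩ := hind _ _ hp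
  rw [← ofAdd_toAdd p, ← Prod.mk.eta (p := p.toAdd), hi, hj]
  rfl

theorem nonempty_closure_pair_mulEquiv (hab : Commute a b)
    (hind : ∀ i j : ℤ, a ^ i * b ^ j = 1 → i = 0 ∧ j = 0) :
    Nonempty (Subgroup.closure {a, b} ≃* Multiplicative (ℤ × ℤ)) :=
  ⟨(MulEquiv.subgroupCongr hab.range_zpowPairHom.symm).trans
    (MonoidHom.ofInjective (hab.zpowPairHom_injective hind)).symm⟩

end Commute

namespace zSemidirect

variable {K : Type*} [Group K] (α : MulAut K)

theorem inr_mul_inl (n : ℤ) (k : K) :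
    (inr (Multiplicative.ofAdd n) * inl k : zSemidirect K α) =
      inl ((α ^ n) k) * inr (Multiplicative.ofAdd n) := by
  rw [show (α ^ n) k = zAction α (Multiplicative.ofAdd n) k from rfl, inl_aut, map_inv,
    inv_mul_cancel_right]

theorem commute_inl_of_apply_eq_conj {k c : K} {n : ℤ} (h : (α ^ n) k = c * k * c⁻¹) :
    Commute (inl k : zSemidirect K α) (inl c⁻¹ * inr (Multiplicative.ofAdd n)) := by
  show _ = _
  rw [mul_assoc, inr_mul_inl, h, ← mul_assoc, ← map_mul, ← mul_assoc, ← map_mul]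
  group

theorem eq_zero_of_zpow_inl_mul_zpow_eq_one {k c : K} {n : ℤ} (hk : ¬IsOfFinOrder k)
    (hn : n ≠ 0) {i j : ℤ}
    (h : (inl k : zSemidirect K α) ^ i * (inl c⁻¹ * inr (Multiplicative.ofAdd n)) ^ j = 1) :
    i = 0 ∧ j = 0 := by
  have hj : j = 0 := by
    have := congrArg rightHom h
    simp only [map_mul, map_zpow, rightHom_inl, rightHom_inr, one_zpow, one_mul, map_one,
      ← ofAdd_zsmul] at this
    simpa [hn] using this
  subst hj
  refine ⟨injective_zpow_iff_not_isOfFinOrder.mpr hk ?_, rfl⟩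
  exact inl_injective (by simpa [← map_zpow] using h)

end zSemidirect

/-- If `K` is torsion-free and `α` has a periodic conjugacy class,
i.e. `αⁿ(k) = c k c⁻¹` with `k ≠ 1`, `n ≠ 0`, then `G = K ⋊_α ℤ` contains a subgroup
isomorphic to `ℤ × ℤ`, namely the subgroup generated by `k` and `c⁻¹ tⁿ` (where `t` is
the generator of the `ℤ` factor). -/
theorem statement14 {K : Type*} [Group K] (htf : ∀ g : K, g ≠ 1 → ¬IsOfFinOrder g)
    (α : MulAut K) (k : K) (n : ℤ) (c : K) (hk : k ≠ 1) (hn : n ≠ 0)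
    (h : (α ^ n) k = c * k * c⁻¹) :
    Nonempty (↥(Subgroup.closure ({SemidirectProduct.inl k,
        SemidirectProduct.inl c⁻¹ * SemidirectProduct.inr (Multiplicative.ofAdd n)} :
        Set (zSemidirect K α))) ≃* Multiplicative (ℤ × ℤ)) :=
  (zSemidirect.commute_inl_of_apply_eq_conj α h).nonempty_closure_pair_mulEquiv
    fun _ _ => zSemidirect.eq_zero_of_zpow_inl_mul_zpow_eq_one α (htf k hk) hn
end

section
/- Let G be a group, let t, x ∈ G, and for each integer i set x_i = tⁱ x t⁻ⁱ. Let α and β be coprime integers and suppose that for every integer i the relations x_iᵅ x_{i+1}ᵝ = e and x_i x_{i+1} = x_{i+1} x_i hold in G. If the subgroup L = ⟨x_i : i ∈ ℤ⟩ is equal to ⟨x_0, x_1, …, x_n⟩ for some natural number n, then L is abelian. -/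
/-!
Write `X i = tⁱ x t⁻ⁱ` and `L = ⟨X i : i ∈ ℤ⟩`. The relation `X iᵃ = X (i+1)^(-b)`, iterated,
puts `X j^(aⁿ)` into the cyclic groups `⟨X (j+m)⟩` for `m = 0, …, n`, and likewise
`X j^(bⁿ)` into `⟨X (j-m)⟩`. Conjugation by `tʲ` maps `L = ⟨X 0, …, X n⟩` onto both `L` and
`⟨X j, …, X (j+n)⟩`, so an element commuting with `n + 1` consecutive generators is central in
`L`. Hence `X j^(aⁿ)` and `X j^(bⁿ)` are central, and since `aⁿ` and `bⁿ` are coprime so is `X j`.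
-/

open Subgroup

section Cascade

variable {G : Type*} [Group G] (X : ℤ → G) {a c : ℤ}

theorem zpow_pow_eq_of_zpow_eq_zpow_succ (h : ∀ i, X i ^ a = X (i + 1) ^ c) (m : ℕ) (i : ℤ) :
    X i ^ (a ^ m) = X (i + m) ^ (c ^ m) := by
  induction m with
  | zero => simp
  | succ m ih =>
    rw [pow_succ, zpow_mul, ih, ← zpow_mul, mul_comm, zpow_mul, h, ← zpow_mul, ← pow_succ',
      Nat.cast_succ, add_assoc]

theorem commute_zpow_pow_of_zpow_eq_zpow_succ (h : ∀ i, X i ^ a = X (i + 1) ^ c)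
    {m n : ℕ} (hmn : m ≤ n) (i : ℤ) : Commute (X i ^ (a ^ n)) (X (i + m)) := by
  rw [← Nat.add_sub_cancel' hmn, pow_add, zpow_mul, zpow_pow_eq_of_zpow_eq_zpow_succ X h,
    ← zpow_mul]
  exact Commute.zpow_self _ _

variable {b : ℤ}

theorem commute_zpow_pow_add (hrel : ∀ i, X i ^ a * X (i + 1) ^ b = 1) {m n : ℕ} (hmn : m ≤ n)
    (i : ℤ) : Commute (X i ^ (a ^ n)) (X (i + m)) :=
  commute_zpow_pow_of_zpow_eq_zpow_succ X
    (fun i ↦ by rw [zpow_neg]; exact eq_inv_of_mul_eq_one_left (hrel i)) hmn i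

theorem commute_zpow_pow_sub (hrel : ∀ i, X i ^ a * X (i + 1) ^ b = 1) {m n : ℕ} (hmn : m ≤ n)
    (i : ℤ) : Commute (X i ^ (b ^ n)) (X (i - m)) := by
  have h (i : ℤ) : X (-i) ^ b = X (-(i + 1)) ^ (-a) := by
    rw [zpow_neg]
    refine eq_inv_of_mul_eq_one_right ?_
    simpa [neg_add_eq_sub] using hrel (-(i + 1))
  simpa [neg_add_eq_sub] using
    commute_zpow_pow_of_zpow_eq_zpow_succ (fun i ↦ X (-i)) h hmn (-i)

end Cascade

theorem Subgroup.mem_of_zpow_mem_of_zpow_mem {G : Type*} [Group G] {H : Subgroup G} {g : G}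
    {p q : ℤ} (hpq : IsCoprime p q) (hp : g ^ p ∈ H) (hq : g ^ q ∈ H) : g ∈ H := by
  obtain ⟨u, v, huv⟩ := hpq
  have hg : g = (g ^ p) ^ u * (g ^ q) ^ v := by
    rw [← zpow_mul, ← zpow_mul, ← zpow_add, mul_comm p, mul_comm q, huv, zpow_one]
  rw [hg]
  exact H.mul_mem (H.zpow_mem hp u) (H.zpow_mem hq v)

section ConjSeq

variable {G : Type*} [Group G] (t x : G)

def conjSeq (i : ℤ) : G := t ^ i * x * t ^ (-i)

theorem conj_conjSeq (k i : ℤ) : MulAut.conj (t ^ k) (conjSeq t x i) = conjSeq t x (k + i) := by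
  simp only [conjSeq, MulAut.conj_apply, zpow_add, zpow_neg, mul_inv_rev, mul_assoc]

theorem map_conj_closure_range_conjSeq (k : ℤ) :
    (closure (Set.range (conjSeq t x))).map (MulAut.conj (t ^ k)).toMonoidHom =
      closure (Set.range (conjSeq t x)) := by
  rw [MonoidHom.map_closure, ← Set.range_comp]
  congr 1
  ext g
  simp only [Set.mem_range, Function.comp_apply, MulEquiv.coe_toMonoidHom, conj_conjSeq]
  exact ⟨fun ⟨i, hi⟩ ↦ ⟨k + i, hi⟩, fun ⟨i, hi⟩ ↦ ⟨i - k, by rwa [add_sub_cancel]⟩⟩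

theorem mem_centralizer_closure_range_conjSeq {n : ℕ}
    (hfin : closure (Set.range (conjSeq t x)) =
      closure ((fun m : ℕ ↦ conjSeq t x m) '' Set.Iic n))
    {c : G} (j : ℤ) (hc : ∀ m ≤ n, Commute c (conjSeq t x (j + m))) :
    c ∈ centralizer (closure (Set.range (conjSeq t x)) : Set G) := by
  have hwindow : closure (Set.range (conjSeq t x)) =
      closure ((fun m : ℕ ↦ conjSeq t x (j + m)) '' Set.Iic n) := by
    rw [← map_conj_closure_range_conjSeq t x j, hfin, MonoidHom.map_closure, Set.image_image]
    simp only [MulEquiv.coe_toMonoidHom, conj_conjSeq]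
  have hle : closure (Set.range (conjSeq t x)) ≤ centralizer {c} := by
    rw [hwindow, closure_le]
    rintro _ ⟨m, hm, rfl⟩
    exact mem_centralizer_singleton_iff.2 (hc m hm).symm
  exact mem_centralizer_iff.2 fun h hh ↦ mem_centralizer_singleton_iff.1 (hle hh)

end ConjSeq

theorem statement19_general {G : Type*} [Group G] (t x : G) (a b : ℤ) (hco : Int.gcd a b = 1)
    (hrel : ∀ i : ℤ, (t ^ i * x * t ^ (-i)) ^ a * (t ^ (i + 1) * x * t ^ (-(i + 1))) ^ b = 1)
    (n : ℕ)
    (hfin : Subgroup.closure {g | ∃ i : ℤ, g = t ^ i * x * t ^ (-i)} =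
      Subgroup.closure {g | ∃ i : ℕ, i ≤ n ∧ g = t ^ (i : ℤ) * x * t ^ (-(i : ℤ))}) :
    ∀ y ∈ Subgroup.closure {g | ∃ i : ℤ, g = t ^ i * x * t ^ (-i)},
    ∀ z ∈ Subgroup.closure {g | ∃ i : ℤ, g = t ^ i * x * t ^ (-i)},
      y * z = z * y := by
  have hrange : {g | ∃ i : ℤ, g = t ^ i * x * t ^ (-i)} = Set.range (conjSeq t x) := by
    ext; simp [conjSeq, eq_comm]
  have hwindow : {g | ∃ i : ℕ, i ≤ n ∧ g = t ^ (i : ℤ) * x * t ^ (-(i : ℤ))} =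
      (fun m : ℕ ↦ conjSeq t x m) '' Set.Iic n := by
    ext; simp [conjSeq, eq_comm]
  rw [hrange, hwindow] at hfin
  rw [hrange]
  set L := closure (Set.range (conjSeq t x))
  have hcop : IsCoprime (a ^ n) (b ^ n) := (Int.isCoprime_iff_gcd_eq_one.2 hco).pow
  have hcentral (j : ℤ) : conjSeq t x j ∈ centralizer (L : Set G) := by
    refine mem_of_zpow_mem_of_zpow_mem hcop
      (mem_centralizer_closure_range_conjSeq t x hfin j
        fun m hm ↦ commute_zpow_pow_add _ hrel hm j)
      (mem_centralizer_closure_range_conjSeq t x hfin (j - n) fun m hm ↦ ?_)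
    rw [show j - n + m = j - (n - m : ℕ) by omega]
    exact commute_zpow_pow_sub _ hrel (Nat.sub_le n m) j
  have hL : L ≤ centralizer (L : Set G) := (closure_le _).2 (Set.range_subset_iff.2 hcentral)
  exact fun y hy z hz ↦ (mem_centralizer_iff.1 (hL hy) z hz).symm

/-- Let `t, x ∈ G` and set `xᵢ = tⁱ x t⁻ⁱ`. Let `a, b` be coprime integers
and suppose that for every `i` the relations `xᵢᵃ x_{i+1}ᵇ = 1` and
`xᵢ x_{i+1} = x_{i+1} xᵢ` hold. If the subgroup `L = ⟨xᵢ : i ∈ ℤ⟩` equals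
`⟨x₀, x₁, …, x_n⟩` for some natural number `n`, then `L` is abelian. -/
theorem statement19 {G : Type*} [Group G] (t x : G) (a b : ℤ) (hco : Int.gcd a b = 1)
    (hrel : ∀ i : ℤ, (t ^ i * x * t ^ (-i)) ^ a * (t ^ (i + 1) * x * t ^ (-(i + 1))) ^ b = 1)
    (hcomm : ∀ i : ℤ, Commute (t ^ i * x * t ^ (-i)) (t ^ (i + 1) * x * t ^ (-(i + 1))))
    (n : ℕ)
    (hfin : Subgroup.closure {g | ∃ i : ℤ, g = t ^ i * x * t ^ (-i)} =
      Subgroup.closure {g | ∃ i : ℕ, i ≤ n ∧ g = t ^ (i : ℤ) * x * t ^ (-(i : ℤ))}) :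
    ∀ y ∈ Subgroup.closure {g | ∃ i : ℤ, g = t ^ i * x * t ^ (-i)},
    ∀ z ∈ Subgroup.closure {g | ∃ i : ℤ, g = t ^ i * x * t ^ (-i)},
      y * z = z * y :=
  statement19_general t x a b hco hrel n hfin
end
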